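/- Let P be a finite, non-collinear subset of the Euclidean plane ℝ², and let p, p' ∈ P be distinct points such that e = V_P(p) ∩ V_P(p') contains more than one point (so e is a Voronoi edge). If e is unbounded, then e contains exactly one Voronoi vertex, i.e. (e ∩ 𝒱(P)).ncard = 1; if e is bounded, then e contains exactly two Voronoi vertices, i.e. (e ∩ 𝒱(P)).ncard = 2. -/
import Mathlib


open Set

abbrev Plane : Type := EuclideanSpace ℝ (Fin 2)

/-- The Voronoi cell of a generator `p` for a generating set `P`. -/
def cell (P : Set Plane) (p : Plane) : Set Plane :=
  {x : Plane | ∀ q ∈ P, dist x p ≤ dist x q}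

/-- The set of nearest generators of `x` in `P`. -/
def nearest (P : Set Plane) (x : Plane) : Set Plane :=
  {p ∈ P | ∀ q ∈ P, dist x p ≤ dist x q}

/-- The Voronoi vertex set: points with at least 3 nearest generators. -/
def vtx (P : Set Plane) : Set Plane :=
  {x : Plane | 3 ≤ (nearest P x).encard}

/-- The boundary of a point set: its points on the frontier of its convex hull. -/
def Bd (S : Set Plane) : Set Plane :=
  S ∩ frontier (convexHull ℝ S)

/-- The number of instances of cocircularity. -/
noncomputable def Ic (P : Set Plane) : ℤ :=
  ∑ᶠ x ∈ vtx P, (((nearest P x).ncard : ℤ) - 3)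

section Aux

open RealInnerProductSpace

/-- In the plane, two vectors orthogonal to a fixed nonzero vector are parallel. -/
lemma aux_dim (d a b : Plane) (hd : d ≠ 0) (hb : b ≠ 0)
    (ha' : ⟪d, a⟫ = 0) (hb' : ⟪d, b⟫ = 0) : ∃ c : ℝ, a = c • b := by
  have hK : Module.finrank ℝ (ℝ ∙ d)ᗮ = 1 := by
    have h2 : Module.finrank ℝ Plane = 2 := by simp
    have h3 := Submodule.finrank_add_finrank_orthogonal (K := (ℝ ∙ d))
    rw [finrank_span_singleton hd] at h3
    omega
  have haK : a ∈ (ℝ ∙ d)ᗮ := by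
    rw [Submodule.mem_orthogonal_singleton_iff_inner_left, real_inner_comm]; exact ha'
  have hbK : b ∈ (ℝ ∙ d)ᗮ := by
    rw [Submodule.mem_orthogonal_singleton_iff_inner_left, real_inner_comm]; exact hb'
  have hle : (ℝ ∙ b) ≤ (ℝ ∙ d)ᗮ := by
    rw [Submodule.span_singleton_le_iff_mem]; exact hbK
  have heq : (ℝ ∙ b) = (ℝ ∙ d)ᗮ := by
    apply Submodule.eq_of_le_of_finrank_le hle
    rw [hK, finrank_span_singleton hb]
  obtain ⟨c, hc⟩ := Submodule.mem_span_singleton.mp (heq ▸ haK)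
  exact ⟨c, hc.symm⟩

/-- Comparison of distances via a linear expression. -/
lemma aux_dist_sq (x p q : Plane) :
    dist x q ^ 2 - dist x p ^ 2 = 2 * ⟪x, p - q⟫ + ‖q‖ ^ 2 - ‖p‖ ^ 2 := by
  rw [dist_eq_norm, dist_eq_norm, norm_sub_sq_real, norm_sub_sq_real, inner_sub_right]
  ring

lemma aux_sq_le (a b : ℝ) (ha : 0 ≤ a) (hb : 0 ≤ b) : a ≤ b ↔ a ^ 2 ≤ b ^ 2 := by
  constructor
  · intro h; nlinarith
  · intro h; by_contra hc; push_neg at hc; nlinarith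

lemma aux_dist_le_iff (x p q : Plane) :
    dist x p ≤ dist x q ↔ 0 ≤ 2 * ⟪x, p - q⟫ + ‖q‖ ^ 2 - ‖p‖ ^ 2 := by
  rw [aux_sq_le _ _ dist_nonneg dist_nonneg, ← sub_nonneg, aux_dist_sq]

lemma aux_dist_eq_iff (x p q : Plane) :
    dist x p = dist x q ↔ 2 * ⟪x, p - q⟫ + ‖q‖ ^ 2 - ‖p‖ ^ 2 = 0 := by
  constructor
  · intro h
    have := aux_dist_sq x p q
    rw [h] at this
    linarith
  · intro h
    have h2 := aux_dist_sq x p q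
    rw [h] at h2
    have : dist x q ^ 2 = dist x p ^ 2 := by linarith
    nlinarith [dist_nonneg (x := x) (y := p), dist_nonneg (x := x) (y := q)]

/-- Cocircularity: if `u` is equidistant from `p`, `p'` and from `p - c • (p - p')`,
then `c = 0` or `c = 1`. -/
lemma aux_cocirc (u p p' : Plane) (c : ℝ) (hne : p ≠ p')
    (h1 : dist u p = dist u p') (h2 : dist u p = dist u (p - c • (p - p'))) :
    c = 0 ∨ c = 1 := by
  have h1' : ‖u - p‖ ^ 2 = ‖u - p'‖ ^ 2 := by
    rw [← dist_eq_norm, ← dist_eq_norm, h1]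
  have h2' : ‖u - p‖ ^ 2 = ‖u - (p - c • (p - p'))‖ ^ 2 := by
    rw [← dist_eq_norm, ← dist_eq_norm, h2]
  have hrw1 : u - p' = (u - p) + (p - p') := by abel
  have hrw2 : u - (p - c • (p - p')) = (u - p) + c • (p - p') := by abel
  rw [hrw1, norm_add_sq_real] at h1'
  rw [hrw2, norm_add_sq_real, real_inner_smul_right, norm_smul, Real.norm_eq_abs,
    mul_pow, sq_abs] at h2'
  have hD : (0:ℝ) < ‖p - p'‖ ^ 2 := by
    have h0 : 0 < ‖p - p'‖ := norm_pos_iff.mpr (sub_ne_zero.mpr hne)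
    positivity
  have key : c * (c - 1) * ‖p - p'‖ ^ 2 = 0 := by linear_combination c * h1' - h2'
  have : c * (c - 1) = 0 := by
    rcases mul_eq_zero.mp key with h | h
    · exact h
    · exact absurd h hD.ne'
  rcases mul_eq_zero.mp this with h | h
  · exact Or.inl h
  · exact Or.inr (by linarith)

/-- The left endpoint of a finitely-constrained interval saturates some
constraint with positive slope. -/
lemma aux_left_endpoint {P : Set Plane} (hP : P.Finite) (A B : Plane → ℝ) (a : ℝ)
    (ha : ∀ q ∈ P, 0 ≤ A q + B q * a)
    (hlb : ∀ t, (∀ q ∈ P, 0 ≤ A q + B q * t) → a ≤ t) :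
    ∃ q ∈ P, 0 < B q ∧ A q + B q * a = 0 := by
  classical
  set Bp : Set Plane := {q ∈ P | 0 < B q} with hBp
  have hBpfin : Bp.Finite := hP.subset (fun q hq => hq.1)
  have hBpne : Bp.Nonempty := by
    have h1 : ¬ (a ≤ a - 1) := by linarith
    have h2 : ¬ ∀ q ∈ P, 0 ≤ A q + B q * (a - 1) := fun h => h1 (hlb _ h)
    push_neg at h2
    obtain ⟨q, hqP, hq⟩ := h2
    refine ⟨q, hqP, ?_⟩
    have := ha q hqP
    nlinarith
  obtain ⟨q₀, hq₀Bp, hq₀max⟩ := Set.exists_max_image Bp (fun q => -(A q) / B q) hBpfin hBpne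
  obtain ⟨hq₀P, hq₀B⟩ := hq₀Bp
  refine ⟨q₀, hq₀P, hq₀B, ?_⟩
  by_contra hc
  have h0 : 0 < A q₀ + B q₀ * a := lt_of_le_of_ne (ha q₀ hq₀P) (Ne.symm hc)
  set m : ℝ := -(A q₀) / B q₀ with hm
  have hma : m < a := by
    rw [hm, div_lt_iff₀ hq₀B]
    nlinarith
  set t : ℝ := (m + a) / 2 with ht
  have hmt : m < t := by rw [ht]; linarith
  have hta : t < a := by rw [ht]; linarith
  have htS : ∀ q ∈ P, 0 ≤ A q + B q * t := by
    intro q hqP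
    rcases lt_trichotomy (B q) 0 with hB | hB | hB
    · have := ha q hqP
      nlinarith
    · have := ha q hqP
      rw [hB] at this ⊢
      linarith
    · have hq : -(A q) / B q ≤ m := hq₀max q ⟨hqP, hB⟩
      rw [div_le_iff₀ hB] at hq
      nlinarith
  exact absurd (hlb t htS) (by linarith)

end Aux

section Main

open RealInnerProductSpace Bornology

set_option maxHeartbeats 1000000 in
theorem edge_vertex_count (P : Set Plane) (hP : P.Finite)
    (hcol : ¬ Collinear ℝ P) (p p' : Plane) (hp : p ∈ P) (hp' : p' ∈ P) (hne : p ≠ p')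
    (hedge : (cell P p ∩ cell P p').Nontrivial) :
    (¬ Bornology.IsBounded (cell P p ∩ cell P p') →
      ((cell P p ∩ cell P p') ∩ vtx P).ncard = 1) ∧
    (Bornology.IsBounded (cell P p ∩ cell P p') →
      ((cell P p ∩ cell P p') ∩ vtx P).ncard = 2) := by
  classical
  obtain ⟨u, hu, v, hv, huv⟩ := hedge
  set e : Set Plane := cell P p ∩ cell P p' with he
  have hvu : v - u ≠ 0 := sub_ne_zero.mpr (Ne.symm huv)
  have hpp' : p - p' ≠ 0 := sub_ne_zero.mpr hne
  -- the parametrizing map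
  set L : ℝ → Plane := fun t => t • (v - u) + u with hL
  have hLinj : Function.Injective L := by
    intro s t hst
    have h1 : s • (v - u) + u = t • (v - u) + u := hst
    have h2 : s • (v - u) = t • (v - u) := (add_left_inj u).mp h1
    have h3 : (s - t) • (v - u) = 0 := by rw [sub_smul, h2, sub_self]
    rcases smul_eq_zero.mp h3 with h | h
    · exact sub_eq_zero.mp h
    · exact absurd h hvu
  -- affine data
  set A : Plane → ℝ := fun q => 2 * ⟪u, p - q⟫ + ‖q‖ ^ 2 - ‖p‖ ^ 2 with hA
  set B : Plane → ℝ := fun q => 2 * ⟪v - u, p - q⟫ with hB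
  have haff : ∀ (t : ℝ) (q : Plane),
      2 * ⟪L t, p - q⟫ + ‖q‖ ^ 2 - ‖p‖ ^ 2 = A q + B q * t := by
    intro t q
    rw [hL, hA, hB]
    simp only [inner_add_left, real_inner_smul_left]
    ring
  -- membership in e via distances
  have hue : u ∈ e := hu
  have hve : v ∈ e := hv
  have hueq : dist u p = dist u p' := le_antisymm (hue.1 p' hp') (hue.2 p hp)
  have hveq : dist v p = dist v p' := le_antisymm (hve.1 p' hp') (hve.2 p hp)
  have hAp' : A p' = 0 := by
    have := (aux_dist_eq_iff u p p').mp hueq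
    rw [hA]; exact this
  have hL1' : L 1 = v := by rw [hL]; simp
  have hABp' : A p' + B p' * 1 = 0 := by
    rw [← haff 1 p', hL1']
    exact (aux_dist_eq_iff v p p').mp hveq
  have hBp' : B p' = 0 := by linarith
  have hBp : B p = 0 := by rw [hB]; simp
  have hAp : A p = 0 := by rw [hA]; simp
  -- the parameter set
  set S : Set ℝ := {t | ∀ q ∈ P, 0 ≤ A q + B q * t} with hS
  have hmem : ∀ t, L t ∈ e ↔ t ∈ S := by
    intro t
    constructor
    · intro hte q hqP
      rw [← haff, ← aux_dist_le_iff]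
      exact hte.1 q hqP
    · intro htS
      have hcellp : L t ∈ cell P p := by
        intro q hqP
        rw [aux_dist_le_iff, haff]
        exact htS q hqP
      have heqd : dist (L t) p = dist (L t) p' := by
        rw [aux_dist_eq_iff, haff, hAp', hBp']
        ring
      refine ⟨hcellp, ?_⟩
      intro q hqP
      rw [← heqd]
      exact hcellp q hqP
  have hL0 : L 0 = u := by rw [hL]; simp
  have hL1 : L 1 = v := by rw [hL]; simp
  have h0S : (0:ℝ) ∈ S := by rw [← hmem, hL0]; exact hu
  have h1S : (1:ℝ) ∈ S := by rw [← hmem, hL1]; exact hv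
  have himg : e = L '' S := by
    apply Subset.antisymm
    · intro x hxe
      have hxeq : dist x p = dist x p' := le_antisymm (hxe.1 p' hp') (hxe.2 p hp)
      have hx0 : ⟪p - p', x - u⟫ = 0 := by
        have h1 := (aux_dist_eq_iff x p p').mp hxeq
        have h2 := (aux_dist_eq_iff u p p').mp hueq
        have h3 : ⟪x, p - p'⟫ = ⟪u, p - p'⟫ := by linarith
        rw [inner_sub_right]
        have c1 : ⟪p - p', x⟫ = ⟪x, p - p'⟫ := real_inner_comm _ _
        have c2 : ⟪p - p', u⟫ = ⟪u, p - p'⟫ := real_inner_comm _ _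
        rw [c1, c2, h3]
        ring
      have hv0 : ⟪p - p', v - u⟫ = 0 := by
        have : B p' = 2 * ⟪v - u, p - p'⟫ := by rw [hB]
        rw [hBp'] at this
        rw [real_inner_comm]
        linarith
      obtain ⟨c, hc⟩ := aux_dim (p - p') (x - u) (v - u) hpp' hvu hx0 hv0
      have hxL : x = L c := by
        rw [hL]
        simp only []
        rw [← hc]
        abel
      exact ⟨c, (hmem c).mp (hxL ▸ hxe), hxL.symm⟩
    · rintro x ⟨t, htS, rfl⟩
      exact (hmem t).mpr htS
  -- boundedness transfer
  have hbdd : IsBounded e ↔ IsBounded S := by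
    rw [himg]
    constructor
    · intro h
      rw [isBounded_iff_forall_norm_le] at h ⊢
      obtain ⟨C, hC⟩ := h
      refine ⟨(C + ‖u‖) / ‖v - u‖, ?_⟩
      intro t htS
      have h1 : ‖L t‖ ≤ C := hC _ ⟨t, htS, rfl⟩
      have h2 : ‖t • (v - u)‖ ≤ C + ‖u‖ := by
        calc ‖t • (v - u)‖ = ‖L t - u‖ := by rw [hL]; simp
        _ ≤ ‖L t‖ + ‖u‖ := norm_sub_le _ _
        _ ≤ C + ‖u‖ := by linarith
      rw [norm_smul, Real.norm_eq_abs] at h2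
      have hvupos : 0 < ‖v - u‖ := norm_pos_iff.mpr hvu
      rw [← le_div_iff₀ hvupos] at h2
      rw [Real.norm_eq_abs]
      exact h2
    · intro h
      rw [isBounded_iff_forall_norm_le] at h ⊢
      obtain ⟨C, hC⟩ := h
      refine ⟨C * ‖v - u‖ + ‖u‖, ?_⟩
      rintro x ⟨t, htS, rfl⟩
      have h1 : |t| ≤ C := by rw [← Real.norm_eq_abs]; exact hC t htS
      calc ‖L t‖ ≤ ‖t • (v - u)‖ + ‖u‖ := by rw [hL]; exact norm_add_le _ _
      _ = |t| * ‖v - u‖ + ‖u‖ := by rw [norm_smul, Real.norm_eq_abs]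
      _ ≤ C * ‖v - u‖ + ‖u‖ := by
          have := norm_nonneg (v - u)
          nlinarith
  -- S is closed
  have hSclosed : IsClosed S := by
    have : S = ⋂ q ∈ P, {t : ℝ | 0 ≤ A q + B q * t} := by
      ext t; simp [hS]
    rw [this]
    exact isClosed_biInter fun q _ =>
      isClosed_le continuous_const (continuous_const.add (continuous_const.mul continuous_id))
  -- making vertices
  have hmkvtx : ∀ t q, q ∈ P → q ≠ p → q ≠ p' → t ∈ S → A q + B q * t = 0 →
      L t ∈ vtx P := by
    intro t q hqP hqp hqp' htS hzero
    have hnear : ({p, p', q} : Set Plane) ⊆ nearest P (L t) := by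
      have hcp : ∀ q' ∈ P, dist (L t) p ≤ dist (L t) q' := by
        intro q' hq'
        rw [aux_dist_le_iff, haff]
        exact htS q' hq'
      have heqp' : dist (L t) p = dist (L t) p' := by
        rw [aux_dist_eq_iff, haff, hAp', hBp']; ring
      have heqq : dist (L t) p = dist (L t) q := by
        rw [aux_dist_eq_iff, haff]; exact hzero
      rintro x (rfl | rfl | rfl)
      · exact ⟨hp, hcp⟩
      · exact ⟨hp', fun q' hq' => heqp' ▸ hcp q' hq'⟩
      · exact ⟨hqP, fun q' hq' => heqq ▸ hcp q' hq'⟩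
    have h3 : ({p, p', q} : Set Plane).encard = 3 := by
      rw [Set.encard_insert_of_notMem (by simp [hne, Ne.symm hqp]),
        Set.encard_pair (Ne.symm hqp')]
      rfl
    have h4 := Set.encard_mono hnear
    rw [h3] at h4
    exact h4
  -- no vertex strictly inside
  have hinterior : ∀ t₀ t₁ t₂, t₁ ∈ S → t₂ ∈ S → t₁ < t₀ → t₀ < t₂ → t₀ ∈ S →
      L t₀ ∉ vtx P := by
    intro t₀ t₁ t₂ ht₁ ht₂ h₁ h₂ ht₀ hvtx
    have hnsub : ¬ (nearest P (L t₀) ⊆ {p, p'}) := by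
      intro hsub
      have := Set.encard_mono hsub
      rw [Set.encard_pair hne] at this
      have h3 : (3:ℕ∞) ≤ 2 := le_trans hvtx this
      norm_num at h3
    obtain ⟨q, hqn, hqpp⟩ := Set.not_subset.mp hnsub
    simp only [Set.mem_insert_iff, Set.mem_singleton_iff, not_or] at hqpp
    obtain ⟨hqp, hqp'⟩ := hqpp
    obtain ⟨hqP, hqnear⟩ := hqn
    have hqle : dist (L t₀) q ≤ dist (L t₀) p := hqnear p hp
    have hple : dist (L t₀) p ≤ dist (L t₀) q := by
      rw [aux_dist_le_iff, haff]; exact ht₀ q hqP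
    have heq0 : A q + B q * t₀ = 0 := by
      rw [← haff, ← aux_dist_eq_iff]
      exact le_antisymm hple hqle
    have hge1 : 0 ≤ A q + B q * t₁ := ht₁ q hqP
    have hge2 : 0 ≤ A q + B q * t₂ := ht₂ q hqP
    have hBq : B q = 0 := by
      rcases lt_trichotomy (B q) 0 with h | h | h
      · nlinarith
      · exact h
      · nlinarith
    have hAq : A q = 0 := by rw [hBq] at heq0; linarith
    -- q is equidistant from u and v along with p, p'
    have hudist : dist u p = dist u q := by
      rw [aux_dist_eq_iff]
      have : 2 * ⟪u, p - q⟫ + ‖q‖ ^ 2 - ‖p‖ ^ 2 = A q := by rw [hA]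
      rw [this, hAq]
    have hBq' : ⟪v - u, p - q⟫ = 0 := by
      have : B q = 2 * ⟪v - u, p - q⟫ := by rw [hB]
      rw [hBq] at this; linarith
    have hBpp' : ⟪v - u, p - p'⟫ = 0 := by
      have : B p' = 2 * ⟪v - u, p - p'⟫ := by rw [hB]
      rw [hBp'] at this; linarith
    obtain ⟨c, hc⟩ := aux_dim (v - u) (p - q) (p - p') hvu hpp' hBq' hBpp'
    have hqc : q = p - c • (p - p') := by
      rw [← hc]; abel
    rcases aux_cocirc u p p' c hne hueq (hqc ▸ hudist) with h | h
    · apply hqp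
      rw [hqc, h]; simp
    · apply hqp'
      rw [hqc, h]; simp
  -- the vertex set along e
  have hcount : e ∩ vtx P = L '' (S ∩ L ⁻¹' vtx P) := by
    rw [Set.image_inter_preimage, ← himg]
  have hncard : ∀ X : Set ℝ, (L '' X).ncard = X.ncard := fun X =>
    Set.ncard_image_of_injective X hLinj
  -- rule out S unbounded on both sides
  have hside : BddBelow S ∨ BddAbove S := by
    by_contra hcon
    push_neg at hcon
    obtain ⟨hnb, hna⟩ := hcon
    apply hcol
    have hB0 : ∀ q ∈ P, B q = 0 := by
      intro q hqP
      rcases lt_trichotomy (B q) 0 with h | h | h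
      · exfalso
        rw [not_bddAbove_iff] at hna
        obtain ⟨t, htS, ht⟩ := hna (-(A q) / B q)
        have := htS q hqP
        rw [div_lt_iff_of_neg h] at ht
        nlinarith
      · exact h
      · exfalso
        rw [not_bddBelow_iff] at hnb
        obtain ⟨t, htS, ht⟩ := hnb (-(A q) / B q)
        have := htS q hqP
        rw [lt_div_iff₀ h] at ht
        nlinarith
    rw [collinear_iff_of_mem hp]
    refine ⟨p - p', ?_⟩
    intro q hqP
    have hq0 : ⟪v - u, p - q⟫ = 0 := by
      have : B q = 2 * ⟪v - u, p - q⟫ := by rw [hB]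
      rw [hB0 q hqP] at this; linarith
    have hp0 : ⟪v - u, p - p'⟫ = 0 := by
      have : B p' = 2 * ⟪v - u, p - p'⟫ := by rw [hB]
      rw [hBp'] at this; linarith
    obtain ⟨c, hc⟩ := aux_dim (v - u) (p - q) (p - p') hvu hpp' hq0 hp0
    refine ⟨-c, ?_⟩
    have h5 : q = p - c • (p - p') := by rw [← hc]; abel
    rw [h5]
    simp only [vadd_eq_add, neg_smul]
    abel
  have hSne : S.Nonempty := ⟨0, h0S⟩
  -- endpoints give vertices
  have hleft : BddBelow S → sInf S ∈ S ∩ L ⁻¹' vtx P := by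
    intro hbb
    have haS : sInf S ∈ S := IsClosed.csInf_mem hSclosed hSne hbb
    obtain ⟨q, hqP, hqB, hqz⟩ := aux_left_endpoint hP A B (sInf S)
      (fun q hq => haS q hq) (fun t ht => csInf_le hbb ht)
    have hqp : q ≠ p := fun h => by rw [h, hBp] at hqB; exact lt_irrefl 0 hqB
    have hqp' : q ≠ p' := fun h => by rw [h, hBp'] at hqB; exact lt_irrefl 0 hqB
    exact ⟨haS, hmkvtx _ q hqP hqp hqp' haS hqz⟩
  have hright : BddAbove S → sSup S ∈ S ∩ L ⁻¹' vtx P := by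
    intro hba
    have hbS : sSup S ∈ S := IsClosed.csSup_mem hSclosed hSne hba
    obtain ⟨q, hqP, hqB, hqz⟩ := aux_left_endpoint hP A (fun q => -(B q)) (-(sSup S))
      (fun q hq => by simpa using hbS q hq)
      (fun t ht => by
        have htS : -t ∈ S := by
          intro q hq
          have := ht q hq
          simpa using this
        linarith [le_csSup hba htS])
    have hqz' : A q + B q * sSup S = 0 := by linarith [hqz]
    have hqB' : B q < 0 := by linarith
    have hqp : q ≠ p := fun h => by rw [h, hBp] at hqB'; exact lt_irrefl 0 hqB'
    have hqp' : q ≠ p' := fun h => by rw [h, hBp'] at hqB'; exact lt_irrefl 0 hqB'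
    exact ⟨hbS, hmkvtx _ q hqP hqp hqp' hbS hqz'⟩
  -- S is convex (order-convex)
  have hconv : ∀ t₁ t₂ t, t₁ ∈ S → t₂ ∈ S → t₁ ≤ t → t ≤ t₂ → t ∈ S := by
    intro t₁ t₂ t h₁ h₂ hle₁ hle₂ q hqP
    have g₁ := h₁ q hqP
    have g₂ := h₂ q hqP
    rcases le_or_gt 0 (B q) with h | h
    · nlinarith
    · nlinarith
  constructor
  · -- unbounded case
    intro hub
    rw [hbdd] at hub
    rw [isBounded_iff_bddBelow_bddAbove] at hub
    rw [hcount, hncard]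
    rcases hside with hbb | hba
    · -- bounded below, unbounded above
      have hna : ¬ BddAbove S := fun h => hub ⟨hbb, h⟩
      have hkey : S ∩ L ⁻¹' vtx P = {sInf S} := by
        apply Subset.antisymm
        · rintro t ⟨htS, htv⟩
          by_contra hta
          simp only [Set.mem_singleton_iff] at hta
          have halt : sInf S < t := lt_of_le_of_ne (csInf_le hbb htS) (Ne.symm hta)
          rw [not_bddAbove_iff] at hna
          obtain ⟨t₂, ht₂S, ht₂⟩ := hna t
          exact hinterior t (sInf S) t₂ (IsClosed.csInf_mem hSclosed hSne hbb)
            ht₂S halt ht₂ htS htv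
        · rintro t rfl
          exact hleft hbb
      rw [hkey, Set.ncard_singleton]
    · -- unbounded below, bounded above
      have hnb : ¬ BddBelow S := fun h => hub ⟨h, hba⟩
      have hkey : S ∩ L ⁻¹' vtx P = {sSup S} := by
        apply Subset.antisymm
        · rintro t ⟨htS, htv⟩
          by_contra hta
          simp only [Set.mem_singleton_iff] at hta
          have halt : t < sSup S := lt_of_le_of_ne (le_csSup hba htS) hta
          rw [not_bddBelow_iff] at hnb
          obtain ⟨t₁, ht₁S, ht₁⟩ := hnb t
          exact hinterior t t₁ (sSup S) ht₁S (IsClosed.csSup_mem hSclosed hSne hba)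
            ht₁ halt htS htv
        · rintro t rfl
          exact hright hba
      rw [hkey, Set.ncard_singleton]
  · -- bounded case
    intro hb
    rw [hbdd, isBounded_iff_bddBelow_bddAbove] at hb
    obtain ⟨hbb, hba⟩ := hb
    rw [hcount, hncard]
    have hab : sInf S < sSup S := by
      have h1 : sInf S ≤ 0 := csInf_le hbb h0S
      have h2 : (1:ℝ) ≤ sSup S := le_csSup hba h1S
      linarith
    have hkey : S ∩ L ⁻¹' vtx P = {sInf S, sSup S} := by
      apply Subset.antisymm
      · rintro t ⟨htS, htv⟩
        by_contra hta
        simp only [Set.mem_insert_iff, Set.mem_singleton_iff, not_or] at hta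
        obtain ⟨h1, h2⟩ := hta
        have ha : sInf S < t := lt_of_le_of_ne (csInf_le hbb htS) (Ne.symm h1)
        have hb' : t < sSup S := lt_of_le_of_ne (le_csSup hba htS) h2
        exact hinterior t (sInf S) (sSup S) (IsClosed.csInf_mem hSclosed hSne hbb)
          (IsClosed.csSup_mem hSclosed hSne hba) ha hb' htS htv
      · rintro t (rfl | rfl)
        · exact hleft hbb
        · exact hright hba
    rw [hkey, Set.ncard_pair (ne_of_lt hab)]

end Main
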